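/- Fix an integer n ≥ 1, masses m₁, m₂ > 0 and exponents γ₁, γ₂ > 1. For 1 ≤ i ≤ n define the flux component A_i(U) := ( (n₁/ρ(U)) w_i , (n₂/ρ(U)) w_i , (w_i/ρ(U)) w + ((γ₁−1)s₁(n₁) + (γ₂−1)s₂(n₂)) e_i ) ∈ ℝ × ℝ × ℝⁿ, where e_i is the i-th standard basis vector of ℝⁿ. Then A_i is Fréchet differentiable at every state U = (n₁, n₂, w) with n₁, n₂ > 0, and for every state V = (ν₁, ν₂, ω) with ν₁, ν₂ ≥ 0 and ρ(V) > 0, the relative flux satisfies A_i(V) − A_i(U) − DA_i(U)(V − U) = ( (n₁/ρ(U) − ν₁/ρ(V)) ρ(V) (u(U)_i − u(V)_i) , (n₂/ρ(U) − ν₂/ρ(V)) ρ(V) (u(U)_i − u(V)_i) , ρ(V)(u(V) − u(U))(u(V)_i − u(U)_i) + (γ₁−1) s₁(ν₁|n₁) e_i + (γ₂−1) s₂(ν₂|n₂) e_i ), where DA_i(U) denotes the Fréchet derivative of A_i at U. -/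

import Mathlib

open MeasureTheory

/-- The isentropic internal-energy function `s(x) = m^{n(γ−1)/2} x^γ/(γ−1)`. -/
noncomputable def sFn (n : ℕ) (m γ : ℝ) (x : ℝ) : ℝ :=
  m ^ ((n : ℝ) * (γ - 1) / 2) * x ^ γ / (γ - 1)

/-- Its derivative `s′(x) = γ m^{n(γ−1)/2} x^{γ−1}/(γ−1)`. -/
noncomputable def sFn' (n : ℕ) (m γ : ℝ) (x : ℝ) : ℝ :=
  γ * m ^ ((n : ℝ) * (γ - 1) / 2) * x ^ (γ - 1) / (γ - 1)

/-- The relative quantity `s(y|x) = s(y) − s(x) − s′(x)(y − x)`. -/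
noncomputable def sRel (n : ℕ) (m γ : ℝ) (y x : ℝ) : ℝ :=
  sFn n m γ y - sFn n m γ x - sFn' n m γ x * (y - x)

/-- The total mass density `ρ(U) = m₁ n₁ + m₂ n₂` of a state `U = (n₁, n₂, w)`. -/
noncomputable def rhoSt {n : ℕ} (m₁ m₂ : ℝ) (U : ℝ × ℝ × EuclideanSpace ℝ (Fin n)) : ℝ :=
  m₁ * U.1 + m₂ * U.2.1

/-- The bulk velocity `u(U) = w/ρ(U)` of a state `U = (n₁, n₂, w)`. -/
noncomputable def uSt {n : ℕ} (m₁ m₂ : ℝ) (U : ℝ × ℝ × EuclideanSpace ℝ (Fin n)) :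
    EuclideanSpace ℝ (Fin n) :=
  (rhoSt m₁ m₂ U)⁻¹ • U.2.2

/-- The `i`-th flux component
`A_i(U) = ((n₁/ρ) w_i, (n₂/ρ) w_i, (w_i/ρ) w + ((γ₁−1)s₁(n₁) + (γ₂−1)s₂(n₂)) e_i)`. -/
noncomputable def fluxA (n : ℕ) (m₁ m₂ γ₁ γ₂ : ℝ) (i : Fin n)
    (U : ℝ × ℝ × EuclideanSpace ℝ (Fin n)) : ℝ × ℝ × EuclideanSpace ℝ (Fin n) :=
  (U.1 / rhoSt m₁ m₂ U * U.2.2 i,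
   U.2.1 / rhoSt m₁ m₂ U * U.2.2 i,
   (U.2.2 i / rhoSt m₁ m₂ U) • U.2.2 +
     ((γ₁ - 1) * sFn n m₁ γ₁ U.1 + (γ₂ - 1) * sFn n m₂ γ₂ U.2.1) •
       EuclideanSpace.single i 1)

/-!
Apart from the pressure term, every component of `A_i` has the form `Z ↦ (a Z / ρ Z) • w Z` with
`a`, `ρ`, `w` linear in the state. For such a map the first-order Taylor remainder between `U`
and `V` factors as `ρ(V) (a(U)/ρ(U) - a(V)/ρ(V)) • (w(U)/ρ(U) - w(V)/ρ(V))`, which gives the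
convective part of the relative flux. The pressure `(γ₁-1) s₁(n₁) + (γ₂-1) s₂(n₂)` depends on
the state through the densities alone, so its remainder is `(γ₁-1) s₁(ν₁|n₁) + (γ₂-1) s₂(ν₂|n₂)`.
Since the remainder is additive and computed componentwise on pairs, these pieces assemble into
the relative flux.
-/

section LinearRemainder

variable {X Y Z E : Type*} [NormedAddCommGroup X] [NormedSpace ℝ X] [NormedAddCommGroup Y]
  [NormedSpace ℝ Y] [NormedAddCommGroup Z] [NormedSpace ℝ Z] [NormedAddCommGroup E]
  [NormedSpace ℝ E] {U V : X}

noncomputable def linearRemainder (f : X → Y) (U V : X) : Y :=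
  f V - f U - fderiv ℝ f U (V - U)

theorem linearRemainder_prodMk {f : X → Y} {g : X → Z} (hf : DifferentiableAt ℝ f U)
    (hg : DifferentiableAt ℝ g U) :
    linearRemainder (fun x => (f x, g x)) U V =
      (linearRemainder f U V, linearRemainder g U V) := by
  simp only [linearRemainder, hf.fderiv_prodMk hg, ContinuousLinearMap.prod_apply, Prod.mk_sub_mk]

theorem linearRemainder_add {f g : X → Y} (hf : DifferentiableAt ℝ f U)
    (hg : DifferentiableAt ℝ g U) :
    linearRemainder (fun x => f x + g x) U V = linearRemainder f U V + linearRemainder g U V := by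
  simp only [linearRemainder, fderiv_fun_add hf hg, add_apply]
  abel

theorem linearRemainder_smul_const {c : X → ℝ} (hc : DifferentiableAt ℝ c U) (e : Y) :
    linearRemainder (fun x => c x • e) U V = linearRemainder c U V • e := by
  simp only [linearRemainder, fderiv_smul_const hc, ContinuousLinearMap.smulRight_apply, sub_smul]

theorem hasFDerivAt_div_smul (a ρ : X →L[ℝ] ℝ) (w : X →L[ℝ] E) (hU : ρ U ≠ 0) :
    HasFDerivAt (fun x => (a x / ρ x) • w x)
      (((ρ U)⁻¹ • a - (a U / ρ U ^ 2) • ρ).smulRight (w U) + (a U / ρ U) • w) U := by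
  have hinv := (hasDerivAt_inv hU).comp_hasFDerivAt U ρ.hasFDerivAt
  convert (a.hasFDerivAt.mul hinv).smul w.hasFDerivAt using 1
  · funext x
    simp [div_eq_mul_inv]
  · ext x
    simp only [add_apply, ContinuousLinearMap.smulRight_apply, sub_apply, smul_apply, smul_eq_mul,
      Pi.mul_apply, Function.comp_apply, neg_smul, neg_apply]
    module

theorem linearRemainder_div_smul (a ρ : X →L[ℝ] ℝ) (w : X →L[ℝ] E) (hU : ρ U ≠ 0)
    (hV : ρ V ≠ 0) :
    linearRemainder (fun x => (a x / ρ x) • w x) U V =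
      (ρ V * (a U / ρ U - a V / ρ V)) • ((ρ U)⁻¹ • w U - (ρ V)⁻¹ • w V) := by
  rw [linearRemainder, (hasFDerivAt_div_smul a ρ w hU).fderiv]
  simp only [add_apply, ContinuousLinearMap.smulRight_apply, sub_apply, smul_apply, map_sub,
    smul_eq_mul]
  match_scalars <;> field_simp <;> ring

end LinearRemainder

theorem hasDerivAt_sFn (n : ℕ) (m : ℝ) {γ : ℝ} (hγ : 1 < γ) (x : ℝ) :
    HasDerivAt (sFn n m γ) (sFn' n m γ x) x :=
  (((Real.hasDerivAt_rpow_const (Or.inr hγ.le)).const_mul _).div_const _).congr_deriv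
    (by rw [sFn']; ring)

section Pressure

open ContinuousLinearMap

variable {E : Type*} [NormedAddCommGroup E] [NormedSpace ℝ E]

noncomputable def pressure (n : ℕ) (m₁ m₂ γ₁ γ₂ : ℝ) (Z : ℝ × ℝ × E) : ℝ :=
  (γ₁ - 1) * sFn n m₁ γ₁ Z.1 + (γ₂ - 1) * sFn n m₂ γ₂ Z.2.1

theorem hasFDerivAt_pressure (n : ℕ) (m₁ m₂ : ℝ) {γ₁ γ₂ : ℝ} (hγ₁ : 1 < γ₁) (hγ₂ : 1 < γ₂)
    (U : ℝ × ℝ × E) :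
    HasFDerivAt (pressure n m₁ m₂ γ₁ γ₂)
      (((γ₁ - 1) * sFn' n m₁ γ₁ U.1) • fst ℝ ℝ (ℝ × E) +
        ((γ₂ - 1) * sFn' n m₂ γ₂ U.2.1) • fst ℝ ℝ E ∘L snd ℝ ℝ (ℝ × E)) U := by
  have h₁ := (hasDerivAt_sFn n m₁ hγ₁ U.1).comp_hasFDerivAt U (hasFDerivAt_fst (𝕜 := ℝ) (p := U))
  have h₂ := (hasDerivAt_sFn n m₂ hγ₂ U.2.1).comp_hasFDerivAt (f := fun Z : ℝ × ℝ × E => Z.2.1) U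
    ((hasFDerivAt_fst (𝕜 := ℝ)).comp U (hasFDerivAt_snd (𝕜 := ℝ) (p := U)))
  exact ((h₁.const_mul (γ₁ - 1)).add (h₂.const_mul (γ₂ - 1))).congr_fderiv
    (by simp only [smul_smul])

@[fun_prop]
theorem differentiableAt_pressure (n : ℕ) (m₁ m₂ : ℝ) {γ₁ γ₂ : ℝ} (hγ₁ : 1 < γ₁)
    (hγ₂ : 1 < γ₂) (U : ℝ × ℝ × E) : DifferentiableAt ℝ (pressure n m₁ m₂ γ₁ γ₂) U :=
  (hasFDerivAt_pressure n m₁ m₂ hγ₁ hγ₂ U).differentiableAt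

theorem linearRemainder_pressure (n : ℕ) (m₁ m₂ : ℝ) {γ₁ γ₂ : ℝ} (hγ₁ : 1 < γ₁)
    (hγ₂ : 1 < γ₂) (U V : ℝ × ℝ × E) :
    linearRemainder (pressure n m₁ m₂ γ₁ γ₂) U V =
      (γ₁ - 1) * sRel n m₁ γ₁ V.1 U.1 + (γ₂ - 1) * sRel n m₂ γ₂ V.2.1 U.2.1 := by
  rw [linearRemainder, (hasFDerivAt_pressure n m₁ m₂ hγ₁ hγ₂ U).fderiv]
  simp only [pressure, sRel, add_apply, smul_apply, coe_fst', coe_snd', comp_apply, Prod.fst_sub,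
    Prod.snd_sub, smul_eq_mul]
  ring

end Pressure

section Flux

open ContinuousLinearMap

variable {n : ℕ} {m₁ m₂ γ₁ γ₂ : ℝ} {U V : ℝ × ℝ × EuclideanSpace ℝ (Fin n)}

variable (n) in
noncomputable def rhoCLM (m₁ m₂ : ℝ) : ℝ × ℝ × EuclideanSpace ℝ (Fin n) →L[ℝ] ℝ :=
  m₁ • fst ℝ ℝ _ + m₂ • fst ℝ ℝ _ ∘L snd ℝ ℝ _

variable (n) in
noncomputable def momentumCLM :
    ℝ × ℝ × EuclideanSpace ℝ (Fin n) →L[ℝ] EuclideanSpace ℝ (Fin n) :=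
  snd ℝ ℝ _ ∘L snd ℝ ℝ _

theorem rhoCLM_apply (Z : ℝ × ℝ × EuclideanSpace ℝ (Fin n)) :
    rhoCLM n m₁ m₂ Z = rhoSt m₁ m₂ Z :=
  rfl

theorem fluxA_eq (i : Fin n) :
    fluxA n m₁ m₂ γ₁ γ₂ i = fun Z =>
      ((fst ℝ ℝ _ Z / rhoCLM n m₁ m₂ Z) • (EuclideanSpace.proj i ∘L momentumCLM n) Z,
       ((fst ℝ ℝ _ ∘L snd ℝ ℝ _) Z / rhoCLM n m₁ m₂ Z) • (EuclideanSpace.proj i ∘L momentumCLM n) Z,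
       ((EuclideanSpace.proj i ∘L momentumCLM n) Z / rhoCLM n m₁ m₂ Z) • momentumCLM n Z +
         pressure n m₁ m₂ γ₁ γ₂ Z • EuclideanSpace.single i 1) :=
  rfl

theorem differentiableAt_fluxA (hγ₁ : 1 < γ₁) (hγ₂ : 1 < γ₂) (i : Fin n)
    (hU : rhoSt m₁ m₂ U ≠ 0) : DifferentiableAt ℝ (fluxA n m₁ m₂ γ₁ γ₂ i) U := by
  rw [fluxA_eq]
  fun_prop (disch := assumption)

theorem linearRemainder_fluxA (hγ₁ : 1 < γ₁) (hγ₂ : 1 < γ₂) (i : Fin n)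
    (hU : rhoSt m₁ m₂ U ≠ 0) (hV : rhoSt m₁ m₂ V ≠ 0) :
    linearRemainder (fluxA n m₁ m₂ γ₁ γ₂ i) U V =
      ((U.1 / rhoSt m₁ m₂ U - V.1 / rhoSt m₁ m₂ V) * rhoSt m₁ m₂ V *
          (uSt m₁ m₂ U i - uSt m₁ m₂ V i),
       (U.2.1 / rhoSt m₁ m₂ U - V.2.1 / rhoSt m₁ m₂ V) * rhoSt m₁ m₂ V *
          (uSt m₁ m₂ U i - uSt m₁ m₂ V i),
       (rhoSt m₁ m₂ V * (uSt m₁ m₂ V i - uSt m₁ m₂ U i)) • (uSt m₁ m₂ V - uSt m₁ m₂ U) +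
         ((γ₁ - 1) * sRel n m₁ γ₁ V.1 U.1 + (γ₂ - 1) * sRel n m₂ γ₂ V.2.1 U.2.1) •
           EuclideanSpace.single i 1) := by
  rw [fluxA_eq, linearRemainder_prodMk, linearRemainder_prodMk, linearRemainder_add,
    linearRemainder_smul_const, linearRemainder_div_smul _ _ _ hU hV,
    linearRemainder_div_smul _ _ _ hU hV, linearRemainder_div_smul _ _ _ hU hV,
    linearRemainder_pressure n m₁ m₂ hγ₁ hγ₂]
  · simp only [rhoCLM_apply, momentumCLM, coe_fst', coe_snd', comp_apply, PiLp.proj_apply, uSt,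
      PiLp.smul_apply, smul_eq_mul]
    refine Prod.ext (by ring) (Prod.ext (by ring) ?_)
    dsimp only
    module
  all_goals fun_prop (disch := assumption)

end Flux

theorem flux_differentiableAt_and_relative_flux_general (n : ℕ) (m₁ m₂ γ₁ γ₂ : ℝ)
    (hm₁ : 0 < m₁) (hm₂ : 0 < m₂) (hγ₁ : 1 < γ₁) (hγ₂ : 1 < γ₂) (i : Fin n)
    (U : ℝ × ℝ × EuclideanSpace ℝ (Fin n)) (hU1 : 0 < U.1) (hU2 : 0 < U.2.1) :
    DifferentiableAt ℝ (fluxA n m₁ m₂ γ₁ γ₂ i) U ∧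
    ∀ V : ℝ × ℝ × EuclideanSpace ℝ (Fin n), 0 ≤ V.1 → 0 ≤ V.2.1 →
      0 < rhoSt m₁ m₂ V →
      fluxA n m₁ m₂ γ₁ γ₂ i V - fluxA n m₁ m₂ γ₁ γ₂ i U
          - fderiv ℝ (fluxA n m₁ m₂ γ₁ γ₂ i) U (V - U) =
        ((U.1 / rhoSt m₁ m₂ U - V.1 / rhoSt m₁ m₂ V) * rhoSt m₁ m₂ V *
            (uSt m₁ m₂ U i - uSt m₁ m₂ V i),
         (U.2.1 / rhoSt m₁ m₂ U - V.2.1 / rhoSt m₁ m₂ V) * rhoSt m₁ m₂ V *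
            (uSt m₁ m₂ U i - uSt m₁ m₂ V i),
         (rhoSt m₁ m₂ V * (uSt m₁ m₂ V i - uSt m₁ m₂ U i)) •
             (uSt m₁ m₂ V - uSt m₁ m₂ U) +
           ((γ₁ - 1) * sRel n m₁ γ₁ V.1 U.1 + (γ₂ - 1) * sRel n m₂ γ₂ V.2.1 U.2.1) •
             EuclideanSpace.single i 1) := by
  have hρU : rhoSt m₁ m₂ U ≠ 0 := by unfold rhoSt; positivity
  exact ⟨differentiableAt_fluxA hγ₁ hγ₂ i hρU,
    fun V _ _ hρV => linearRemainder_fluxA hγ₁ hγ₂ i hρU hρV.ne'⟩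

/-- `A_i` is Fréchet differentiable at every state `U = (n₁, n₂, w)` with
`n₁, n₂ > 0`, and for every state `V = (ν₁, ν₂, ω)` with `ν₁, ν₂ ≥ 0` and
`ρ(V) > 0`, the relative flux `A_i(V) − A_i(U) − DA_i(U)(V − U)` equals
`((n₁/ρ(U) − ν₁/ρ(V)) ρ(V)(u(U)_i − u(V)_i),
  (n₂/ρ(U) − ν₂/ρ(V)) ρ(V)(u(U)_i − u(V)_i),
  ρ(V)(u(V) − u(U))(u(V)_i − u(U)_i) + (γ₁−1)s₁(ν₁|n₁)e_i + (γ₂−1)s₂(ν₂|n₂)e_i)`. -/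
theorem flux_differentiableAt_and_relative_flux (n : ℕ) (hn : 1 ≤ n) (m₁ m₂ γ₁ γ₂ : ℝ)
    (hm₁ : 0 < m₁) (hm₂ : 0 < m₂) (hγ₁ : 1 < γ₁) (hγ₂ : 1 < γ₂) (i : Fin n)
    (U : ℝ × ℝ × EuclideanSpace ℝ (Fin n)) (hU1 : 0 < U.1) (hU2 : 0 < U.2.1) :
    DifferentiableAt ℝ (fluxA n m₁ m₂ γ₁ γ₂ i) U ∧
    ∀ V : ℝ × ℝ × EuclideanSpace ℝ (Fin n), 0 ≤ V.1 → 0 ≤ V.2.1 →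
      0 < rhoSt m₁ m₂ V →
      fluxA n m₁ m₂ γ₁ γ₂ i V - fluxA n m₁ m₂ γ₁ γ₂ i U
          - fderiv ℝ (fluxA n m₁ m₂ γ₁ γ₂ i) U (V - U) =
        ((U.1 / rhoSt m₁ m₂ U - V.1 / rhoSt m₁ m₂ V) * rhoSt m₁ m₂ V *
            (uSt m₁ m₂ U i - uSt m₁ m₂ V i),
         (U.2.1 / rhoSt m₁ m₂ U - V.2.1 / rhoSt m₁ m₂ V) * rhoSt m₁ m₂ V *
            (uSt m₁ m₂ U i - uSt m₁ m₂ V i),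
         (rhoSt m₁ m₂ V * (uSt m₁ m₂ V i - uSt m₁ m₂ U i)) •
             (uSt m₁ m₂ V - uSt m₁ m₂ U) +
           ((γ₁ - 1) * sRel n m₁ γ₁ V.1 U.1 + (γ₂ - 1) * sRel n m₂ γ₂ V.2.1 U.2.1) •
             EuclideanSpace.single i 1) :=
  flux_differentiableAt_and_relative_flux_general n m₁ m₂ γ₁ γ₂ hm₁ hm₂ hγ₁ hγ₂ i U hU1 hU2
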